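/- arXiv:2212.05222 — 2 statements merged into one kernel-verified Lean document; each statement's English description precedes it below -/
import Mathlib

section
/- Let K be a field, N ≥ 2 an integer, and t, X nonzero elements of K with t^2 ≠ 1. Write [n] = (t^n − t^{−n})/(t − t^{−1}) for n ∈ ℤ. Let V be the free K-vector space with basis {v_a : a ∈ ℤ^{N−1}} (finitely supported formal linear combinations), with the convention a_N := 0, and define K-linear operators for 1 ≤ i ≤ N−1 by: E_i v_a = [a_i − a_{i+1}] v_{a − e_i}; F_1 v_a = ((X t^{−a_1} − X^{−1} t^{a_1})/(t − t^{−1})) v_{a + e_1} and F_i v_a = [a_{i−1} − a_i] v_{a + e_i} for i ≥ 2; K_1 v_a = X t^{a_2 − 2a_1} v_a and K_i v_a = t^{a_{i−1} + a_{i+1} − 2a_i} v_a for i ≥ 2. Then for all i, j one has E_i F_j − F_j E_i = δ_{ij} (K_i − K_i^{−1})/(t − t^{−1}). -/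
/-- Quantum integer `[n] = (tⁿ - t⁻ⁿ)/(t - t⁻¹)` (here `t = q^{1/2}`). -/
noncomputable def qint {K : Type*} [Field K] (t : K) (n : ℤ) : K :=
  (t ^ n - t ^ (-n)) / (t - t⁻¹)

/-- For `a = (a_1, …, a_n) ∈ ℤⁿ`, `aEntry a m` is `a_m` for `1 ≤ m ≤ n`, with the
convention that entries outside this range (in particular `a_N = a_{n+1}`) are `0`. -/
def aEntry {n : ℕ} (a : Fin n → ℤ) (m : ℕ) : ℤ :=
  if h : 1 ≤ m ∧ m ≤ n then a ⟨m - 1, by omega⟩ else 0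

lemma aEntry_add_single {n : ℕ} (a : Fin n → ℤ) (j : Fin n) (c : ℤ) (m : ℕ) :
    aEntry (a + Pi.single j c) m = aEntry a m + (if m = j.val + 1 then c else 0) := by
  unfold aEntry
  by_cases h : 1 ≤ m ∧ m ≤ n
  · simp only [dif_pos h, Pi.add_apply, Pi.single_apply]
    have hiff : ((⟨m - 1, by omega⟩ : Fin n) = j) ↔ m = j.val + 1 := by
      rw [Fin.ext_iff]
      show m - 1 = j.val ↔ m = j.val + 1
      omega
    by_cases hm : m = j.val + 1 <;> simp [hiff, hm]
  · have hm : m ≠ j.val + 1 := by have := j.isLt; omega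
    simp [dif_neg h, hm]

lemma aEntry_sub_single {n : ℕ} (a : Fin n → ℤ) (j : Fin n) (c : ℤ) (m : ℕ) :
    aEntry (a - Pi.single j c) m = aEntry a m - (if m = j.val + 1 then c else 0) := by
  have h : a - Pi.single j c = a + Pi.single j (-c) := by
    funext k
    by_cases hk : k = j <;> simp [Pi.single_apply, hk, sub_eq_add_neg]
  rw [h, aEntry_add_single, sub_eq_add_neg]
  congr 1
  split <;> simp

lemma vermaDivAux {K : Type*} [Field K] (d : K) (hd : d ≠ 0) (p q r s y : K)
    (hnum : p * q - r * s = d * y) :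
    p / d * (q / d) - r / d * (s / d) = d⁻¹ * y := by
  rw [div_mul_div_comm, div_mul_div_comm, div_sub_div_same, hnum,
    mul_div_mul_left y d hd, div_eq_inv_mul]

lemma scal1 {K : Type*} [Field K] (t : K) (ht : t ≠ 0) (hd : t - t⁻¹ ≠ 0) (u v w : ℤ) :
    qint t (u - v) * qint t (v + 1 - w) - qint t (v - w) * qint t (u - v + 1)
      = (t - t⁻¹)⁻¹ * (t ^ (u + w - 2 * v) - t ^ (-(u + w - 2 * v))) := by
  have e1 : t ^ (v + 1 - w) = t ^ (v - w) * t := by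
    rw [show v + 1 - w = (v - w) + 1 by ring, zpow_add_one₀ ht]
  have e2 : t ^ (u - v + 1) = t ^ (u - v) * t := by rw [zpow_add_one₀ ht]
  have e3 : t ^ (u + w - 2 * v) = t ^ (u - v) * (t ^ (v - w))⁻¹ := by
    rw [show u + w - 2 * v = (u - v) - (v - w) by ring, zpow_sub₀ ht, div_eq_mul_inv]
  have hμ : t ^ (u - v) ≠ 0 := zpow_ne_zero _ ht
  have hν : t ^ (v - w) ≠ 0 := zpow_ne_zero _ ht
  simp only [qint, zpow_neg, e1, e2, e3]
  generalize t ^ (u - v) = μ at *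
  generalize t ^ (v - w) = ν at *
  refine vermaDivAux _ hd _ _ _ _ _ ?_
  simp only [mul_inv, inv_inv]
  ring

lemma scal0 {K : Type*} [Field K] (t X : K) (ht : t ≠ 0) (hd : t - t⁻¹ ≠ 0) (hX : X ≠ 0)
    (a1 a2 : ℤ) :
    (X * t ^ (-a1) - X⁻¹ * t ^ a1) / (t - t⁻¹) * qint t (a1 + 1 - a2)
      - qint t (a1 - a2) * ((X * t ^ (-(a1 - 1)) - X⁻¹ * t ^ (a1 - 1)) / (t - t⁻¹))
      = (t - t⁻¹)⁻¹ * (X * t ^ (a2 - 2 * a1) - (X * t ^ (a2 - 2 * a1))⁻¹) := by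
  have e1 : t ^ (a1 + 1 - a2) = t ^ a1 * t * (t ^ a2)⁻¹ := by
    rw [show a1 + 1 - a2 = (a1 + 1) - a2 by ring, zpow_sub₀ ht, zpow_add_one₀ ht, div_eq_mul_inv]
  have e2 : t ^ (a1 - a2) = t ^ a1 * (t ^ a2)⁻¹ := by
    rw [zpow_sub₀ ht, div_eq_mul_inv]
  have e3 : t ^ (a1 - 1) = t ^ a1 * t⁻¹ := by
    rw [zpow_sub₀ ht, zpow_one, div_eq_mul_inv]
  have e4 : t ^ (a2 - 2 * a1) = t ^ a2 * (t ^ a1 * t ^ a1)⁻¹ := by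
    rw [show a2 - 2 * a1 = a2 - (a1 + a1) by ring, zpow_sub₀ ht, zpow_add₀ ht, div_eq_mul_inv]
  have hα : t ^ a1 ≠ 0 := zpow_ne_zero _ ht
  have hβ : t ^ a2 ≠ 0 := zpow_ne_zero _ ht
  simp only [qint, zpow_neg, e1, e2, e3, e4]
  generalize t ^ a1 = α at *
  generalize t ^ a2 = β at *
  refine vermaDivAux _ hd _ _ _ _ _ ?_
  simp only [mul_inv, inv_inv]
  ring


/-- On the free module with basis `{v_a : a ∈ ℤ^{N-1}}` with the Verma-module actions of
`E_i`, `F_i`, `K_i` (and `Kinv i = K_i⁻¹`), one has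
`E_i F_j − F_j E_i = δ_{ij} (K_i − K_i⁻¹)/(t − t⁻¹)`. -/
theorem verma_EF_commutator {K : Type*} [Field K] (N : ℕ) (hN : 2 ≤ N) (t X : K)
    (ht : t ≠ 0) (ht2 : t ^ 2 ≠ 1) (hX : X ≠ 0)
    (E F Kop Kinv : Fin (N - 1) → Module.End K ((Fin (N - 1) → ℤ) →₀ K))
    (hE : ∀ (i : Fin (N - 1)) (a : Fin (N - 1) → ℤ),
      E i (Finsupp.single a 1) =
        qint t (aEntry a (i.val + 1) - aEntry a (i.val + 2)) •
          Finsupp.single (a - Pi.single i 1) 1)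
    (hF1 : ∀ (i : Fin (N - 1)) (a : Fin (N - 1) → ℤ), i.val = 0 →
      F i (Finsupp.single a 1) =
        ((X * t ^ (-aEntry a 1) - X⁻¹ * t ^ (aEntry a 1)) / (t - t⁻¹)) •
          Finsupp.single (a + Pi.single i 1) 1)
    (hFi : ∀ (i : Fin (N - 1)) (a : Fin (N - 1) → ℤ), 1 ≤ i.val →
      F i (Finsupp.single a 1) =
        qint t (aEntry a i.val - aEntry a (i.val + 1)) •
          Finsupp.single (a + Pi.single i 1) 1)
    (hK1 : ∀ (i : Fin (N - 1)) (a : Fin (N - 1) → ℤ), i.val = 0 →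
      Kop i (Finsupp.single a 1) =
        (X * t ^ (aEntry a 2 - 2 * aEntry a 1)) • Finsupp.single a 1)
    (hKi : ∀ (i : Fin (N - 1)) (a : Fin (N - 1) → ℤ), 1 ≤ i.val →
      Kop i (Finsupp.single a 1) =
        t ^ (aEntry a i.val + aEntry a (i.val + 2) - 2 * aEntry a (i.val + 1)) •
          Finsupp.single a 1)
    (hKinv1 : ∀ (i : Fin (N - 1)) (a : Fin (N - 1) → ℤ), i.val = 0 →
      Kinv i (Finsupp.single a 1) =
        (X * t ^ (aEntry a 2 - 2 * aEntry a 1))⁻¹ • Finsupp.single a 1)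
    (hKinvi : ∀ (i : Fin (N - 1)) (a : Fin (N - 1) → ℤ), 1 ≤ i.val →
      Kinv i (Finsupp.single a 1) =
        t ^ (-(aEntry a i.val + aEntry a (i.val + 2) - 2 * aEntry a (i.val + 1))) •
          Finsupp.single a 1)
    (i j : Fin (N - 1)) :
    E i * F j - F j * E i =
      if i = j then (t - t⁻¹)⁻¹ • (Kop i - Kinv i) else 0 := by
  have hd : t - t⁻¹ ≠ 0 := by
    intro h
    apply ht2
    have h2 : t * (t - t⁻¹) = 0 := by rw [h, mul_zero]
    rw [mul_sub, mul_inv_cancel₀ ht, sub_eq_zero] at h2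
    rw [pow_two, h2]
  suffices key : ∀ a : Fin (N - 1) → ℤ,
      (E i * F j - F j * E i) (Finsupp.single a 1) =
        (if i = j then (t - t⁻¹)⁻¹ • (Kop i - Kinv i) else 0) (Finsupp.single a 1) by
    refine Finsupp.lhom_ext fun a b => ?_
    have hb : (Finsupp.single a b) = b • Finsupp.single a (1 : K) := by
      rw [Finsupp.smul_single', mul_one]
    rw [hb, map_smul, map_smul, key a]
  intro a
  simp only [LinearMap.sub_apply, Module.End.mul_apply]
  by_cases hij : i = j
  · subst hij
    rw [if_pos rfl]
    simp only [LinearMap.smul_apply, LinearMap.sub_apply]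
    by_cases hi0 : i.val = 0
    · rw [hF1 i a hi0, map_smul, hE i _, hE i a, map_smul, hF1 i _ hi0,
        hK1 i a hi0, hKinv1 i a hi0, add_sub_cancel_right, sub_add_cancel]
      rw [smul_smul, smul_smul, smul_sub, smul_smul, smul_smul, ← sub_smul, ← sub_smul]
      congr 1
      rw [← mul_sub]
      simp only [hi0, zero_add]
      rw [aEntry_add_single, aEntry_add_single, aEntry_sub_single,
        if_pos (by omega : 1 = i.val + 1), if_neg (by omega : ¬ 2 = i.val + 1)]
      simp only [add_zero]
      exact scal0 t X ht hd hX (aEntry a 1) (aEntry a 2)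
    · have hi1 : 1 ≤ i.val := by omega
      rw [hFi i a hi1, map_smul, hE i _, hE i a, map_smul, hFi i _ hi1,
        hKi i a hi1, hKinvi i a hi1, add_sub_cancel_right, sub_add_cancel]
      rw [smul_smul, smul_smul, smul_sub, smul_smul, smul_smul, ← sub_smul, ← sub_smul]
      congr 1
      rw [← mul_sub]
      rw [aEntry_add_single, aEntry_add_single, aEntry_sub_single, aEntry_sub_single,
        if_pos (by omega : i.val + 1 = i.val + 1),
        if_neg (by omega : ¬ i.val + 2 = i.val + 1),
        if_neg (by omega : ¬ i.val = i.val + 1)]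
      simp only [add_zero, sub_zero]
      rw [show aEntry a i.val - (aEntry a (i.val + 1) - 1)
          = aEntry a i.val - aEntry a (i.val + 1) + 1 by ring]
      exact scal1 t ht hd (aEntry a i.val) (aEntry a (i.val + 1)) (aEntry a (i.val + 2))
  · rw [if_neg hij, LinearMap.zero_apply]
    have hvij : i.val ≠ j.val := fun h => hij (Fin.ext h)
    by_cases hj0 : j.val = 0
    · have hi1 : 1 ≤ i.val := by omega
      rw [hF1 j a hj0, map_smul, hE i _, hE i a, map_smul, hF1 j _ hj0,
        sub_add_eq_add_sub, smul_smul, smul_smul, sub_eq_zero]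
      congr 1
      rw [aEntry_add_single, aEntry_add_single, aEntry_sub_single,
        if_neg (by omega : ¬ i.val + 1 = j.val + 1),
        if_neg (by omega : ¬ i.val + 2 = j.val + 1),
        if_neg (by omega : ¬ 1 = i.val + 1)]
      simp only [add_zero, sub_zero]
      ring
    · have hj1 : 1 ≤ j.val := by omega
      rw [hFi j a hj1, map_smul, hE i _, hE i a, map_smul, hFi j _ hj1,
        sub_add_eq_add_sub, smul_smul, smul_smul, sub_eq_zero]
      congr 1
      rw [aEntry_add_single, aEntry_add_single, aEntry_sub_single, aEntry_sub_single,
        if_neg (by omega : ¬ i.val + 1 = j.val + 1)]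
      by_cases hc : j.val = i.val + 1
      · rw [if_pos (by omega : i.val + 2 = j.val + 1),
          if_pos (by omega : j.val = i.val + 1),
          if_neg (by omega : ¬ j.val + 1 = i.val + 1)]
        simp only [add_zero, sub_zero]
        rw [hc, show i.val + 1 + 1 = i.val + 2 from rfl]
        congr 1
        ring
      · rw [if_neg (by omega : ¬ i.val + 2 = j.val + 1),
          if_neg (by omega : ¬ j.val = i.val + 1),
          if_neg (by omega : ¬ j.val + 1 = i.val + 1)]
        simp only [add_zero, sub_zero]
        ring
end

section
/- Let K be a field and t ∈ K a nonzero element such that t^{2d} ≠ 1 for every integer d ≥ 1, and set q = t^2. Then in the ring of formal power series over K in two variables a and b, Σ_{d₁, d₂ ≥ 0} ((−t)^{d₁² + 2d₁d₂ + 2d₂²} · t^{d₁} / ((q; q)_{d₁} (q; q)_{d₂})) · b^{d₁} a^{d₂} = Σ_{d ≥ 0} ((−1)^d q^{d(d+1)/2} / (q; q)_d) · Π_{i=0}^{d−1} (b − a q^i). -/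
/-!
Expand `∏_{i<n} (b - a qⁱ)` by the `q`-binomial theorem. Since the Gaussian binomial
`[n choose k]_q` equals `(q;q)_n / ((q;q)_k (q;q)_{n-k})`, which makes sense because no `(q;q)_m`
vanishes, the identity in degree `n` reduces coefficient by coefficient (`k = d₂`) to
`(-t)^(n² + k²) t^(n-k) = (-1)^(n+k) q^(n(n+1)/2 + k(k-1)/2)`, an identity of monomials in `t`.
-/

open MvPolynomial Finset

/-- `(q; q)_m` -/
def qPochhammer {R : Type*} [CommRing R] (q : R) (m : ℕ) : R :=
  ∏ i ∈ range m, (1 - q ^ (i + 1))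

/-- `gaussBinom q i j` is the Gaussian binomial coefficient `[i + j choose j]_q`; indexing it by
the two parts avoids truncated subtraction. -/
def gaussBinom {R : Type*} [CommSemiring R] (q : R) : ℕ → ℕ → R
  | 0, _ => 1
  | _, 0 => 1
  | i + 1, j + 1 => gaussBinom q i (j + 1) + q ^ (i + 1) * gaussBinom q (i + 1) j

section GaussBinom

variable {R S : Type*}

theorem qPochhammer_succ [CommRing R] (q : R) (m : ℕ) :
    qPochhammer q (m + 1) = qPochhammer q m * (1 - q ^ (m + 1)) :=
  prod_range_succ _ _

theorem qPochhammer_ne_zero [Field R] {q : R} (hq : ∀ d : ℕ, 1 ≤ d → q ^ d ≠ 1) (m : ℕ) :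
    qPochhammer q m ≠ 0 :=
  prod_ne_zero_iff.mpr fun i _ => sub_ne_zero.mpr (hq (i + 1) (by omega)).symm

@[simp]
theorem gaussBinom_zero_left [CommSemiring R] (q : R) (j : ℕ) : gaussBinom q 0 j = 1 := by
  simp [gaussBinom]

@[simp]
theorem gaussBinom_zero_right [CommSemiring R] (q : R) (i : ℕ) : gaussBinom q i 0 = 1 := by
  cases i <;> simp [gaussBinom]

theorem gaussBinom_succ_succ [CommSemiring R] (q : R) (i j : ℕ) :
    gaussBinom q (i + 1) (j + 1) =
      gaussBinom q i (j + 1) + q ^ (i + 1) * gaussBinom q (i + 1) j :=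
  gaussBinom.eq_3 q i j

theorem map_gaussBinom [CommSemiring R] [CommSemiring S] (f : R →+* S) (q : R) (i j : ℕ) :
    f (gaussBinom q i j) = gaussBinom (f q) i j := by
  induction i, j using gaussBinom.induct with
  | case1 j => simp
  | case2 i => simp
  | case3 i j ih₁ ih₂ => simp [gaussBinom_succ_succ, ih₁, ih₂]

theorem gaussBinom_mul_qPochhammer_mul_qPochhammer [CommRing R] (q : R) (i j : ℕ) :
    gaussBinom q i j * qPochhammer q i * qPochhammer q j = qPochhammer q (i + j) := by
  induction i, j using gaussBinom.induct with
  | case1 j => simp [qPochhammer]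
  | case2 i => simp [qPochhammer]
  | case3 i j ih₁ ih₂ =>
    calc _ = gaussBinom q i (j + 1) * qPochhammer q i * qPochhammer q (j + 1) * (1 - q ^ (i + 1))
          + q ^ (i + 1) * (gaussBinom q (i + 1) j * qPochhammer q (i + 1) * qPochhammer q j)
            * (1 - q ^ (j + 1)) := by
          rw [gaussBinom_succ_succ, qPochhammer_succ q i, qPochhammer_succ q j]; ring
      _ = qPochhammer q (i + j + 1) * (1 - q ^ (i + j + 1 + 1)) := by
          rw [ih₁, ih₂, add_right_comm, ← add_assoc]; ring
      _ = qPochhammer q (i + 1 + (j + 1)) := by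
          rw [← qPochhammer_succ]; congr 1; omega

theorem gaussBinom_eq_div [Field R] {q : R} (i j : ℕ) (hi : qPochhammer q i ≠ 0)
    (hj : qPochhammer q j ≠ 0) :
    gaussBinom q i j = qPochhammer q (i + j) / (qPochhammer q i * qPochhammer q j) := by
  rw [← gaussBinom_mul_qPochhammer_mul_qPochhammer, mul_assoc,
    mul_div_cancel_right₀ _ (mul_ne_zero hi hj)]

/-- The `q`-binomial theorem. -/
theorem prod_sub_pow_mul_eq_sum_gaussBinom [CommRing R] (q x y : R) (n : ℕ) :
    ∏ i ∈ range n, (y - q ^ i * x) =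
      ∑ p ∈ antidiagonal n,
        (-1) ^ p.2 * q ^ p.2.choose 2 * gaussBinom q p.1 p.2 * y ^ p.1 * x ^ p.2 := by
  induction n with
  | zero => simp
  | succ n ih =>
    rw [prod_range_succ, ih]
    cases n with
    | zero => simp [Nat.sum_antidiagonal_succ]; ring
    | succ n =>
      rw [mul_sub, sum_mul, sum_mul]
      conv_rhs => rw [Nat.sum_antidiagonal_succ, Nat.sum_antidiagonal_succ']
      conv_lhs => rw [Nat.sum_antidiagonal_succ', Nat.sum_antidiagonal_succ]
      rw [add_sub_add_comm, ← sum_sub_distrib, ← add_assoc]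
      congr 1
      · simp [Nat.choose_succ_succ', pow_succ]; ring
      · refine sum_congr rfl fun ⟨i, j⟩ hij => ?_
        obtain rfl : i + j = n := mem_antidiagonal.mp hij
        simp only [gaussBinom_succ_succ, Nat.choose_succ_succ', Nat.choose_one_right]
        ring

end GaussBinom

theorem Nat.two_mul_choose_two_add_self (n : ℕ) : 2 * n.choose 2 + n = n ^ 2 := by
  induction n with
  | zero => rfl
  | succ n ih => rw [Nat.choose_succ_succ', Nat.choose_one_right]; linear_combination ih

theorem quiverCoeff_eq_mul_gaussBinom {K : Type*} [Field K] {t : K}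
    (hP : ∀ m, qPochhammer (t ^ 2) m ≠ 0) (i j : ℕ) :
    (-t) ^ (i ^ 2 + 2 * i * j + 2 * j ^ 2) * t ^ i /
        (qPochhammer (t ^ 2) i * qPochhammer (t ^ 2) j) =
      (-1) ^ (i + j) * (t ^ 2) ^ ((i + j) * (i + j + 1) / 2) / qPochhammer (t ^ 2) (i + j) *
        ((-1) ^ j * (t ^ 2) ^ j.choose 2 * gaussBinom (t ^ 2) i j) := by
  have hsign : (-1 : K) ^ (i ^ 2 + 2 * i * j + 2 * j ^ 2) = (-1) ^ (i + j) * (-1) ^ j := by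
    have hexp : i ^ 2 + 2 * i * j + 2 * j ^ 2 = i + 2 * (i.choose 2 + i * j + j ^ 2) := by
      linarith [i.two_mul_choose_two_add_self]
    rw [hexp, ← pow_add, add_assoc i j j, ← two_mul]
    simp [pow_add, pow_mul]
  have hpow : t ^ (i ^ 2 + 2 * i * j + 2 * j ^ 2) * t ^ i =
      (t ^ 2) ^ ((i + j) * (i + j + 1) / 2) * (t ^ 2) ^ j.choose 2 := by
    rw [← pow_mul, ← pow_mul, ← pow_add, ← pow_add,
      Nat.two_mul_div_two_of_even (Nat.even_mul_succ_self _)]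
    congr 1
    linarith [j.two_mul_choose_two_add_self]
  rw [gaussBinom_eq_div i j (hP i) (hP j), neg_pow, hsign, mul_assoc, hpow]
  field_simp [hP]

/-- The identity of power series in `K[[a, b]]`, `a = X 0`, `b = X 1`, compared in each total
degree `n`. -/
theorem qHypergeometric_quiver_identity_general {K : Type*} [Field K] (t q : K)
    (ht2 : ∀ d : ℕ, 1 ≤ d → t ^ (2 * d) ≠ 1) (hq : q = t ^ 2) (n : ℕ) :
    ∑ d₁ ∈ Finset.range (n + 1),
      C ((-t) ^ (d₁ ^ 2 + 2 * d₁ * (n - d₁) + 2 * (n - d₁) ^ 2) * t ^ d₁ /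
          ((∏ i ∈ Finset.range d₁, (1 - q ^ (i + 1))) *
            ∏ i ∈ Finset.range (n - d₁), (1 - q ^ (i + 1)))) *
        (X 1 : MvPolynomial (Fin 2) K) ^ d₁ * (X 0) ^ (n - d₁) =
      C ((-1 : K) ^ n * q ^ (n * (n + 1) / 2) /
          ∏ i ∈ Finset.range n, (1 - q ^ (i + 1))) *
        ∏ i ∈ Finset.range n, ((X 1 : MvPolynomial (Fin 2) K) - C (q ^ i) * X 0) := by
  subst hq
  have hP : ∀ m, qPochhammer (t ^ 2) m ≠ 0 :=
    qPochhammer_ne_zero fun d hd => by rw [← pow_mul]; exact ht2 d hd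
  simp only [← qPochhammer.eq_1, map_pow C (t ^ 2), prod_sub_pow_mul_eq_sum_gaussBinom, mul_sum,
    Nat.sum_antidiagonal_eq_sum_range_succ_mk]
  refine sum_congr rfl fun d₁ hd₁ => ?_
  obtain ⟨d₂, rfl⟩ : ∃ d₂, n = d₁ + d₂ := ⟨n - d₁, by grind⟩
  rw [Nat.add_sub_cancel_left, quiverCoeff_eq_mul_gaussBinom hP, ← map_gaussBinom]
  simp only [map_mul, map_pow, map_neg, map_one]
  ring

/-- The q-hypergeometric identity
`Σ_{d₁,d₂≥0} (−t)^{d₁²+2d₁d₂+2d₂²} t^{d₁} b^{d₁} a^{d₂} / ((q;q)_{d₁}(q;q)_{d₂})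
  = Σ_{d≥0} (−1)^d q^{d(d+1)/2} ∏_{i=0}^{d−1}(b − a qⁱ) / (q;q)_d`
in `K[[a,b]]` (with `q = t²`): since each term on the left with `d₁ + d₂ = n` and the
`d = n` term on the right are homogeneous of total degree `n` in the variables
`a = X 0`, `b = X 1`, the two power series are equal iff for every `n` the degree-`n`
homogeneous components agree, which is the statement below. -/
theorem qHypergeometric_quiver_identity {K : Type*} [Field K] (t q : K) (ht : t ≠ 0)
    (ht2 : ∀ d : ℕ, 1 ≤ d → t ^ (2 * d) ≠ 1) (hq : q = t ^ 2) (n : ℕ) :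
    ∑ d₁ ∈ Finset.range (n + 1),
      C ((-t) ^ (d₁ ^ 2 + 2 * d₁ * (n - d₁) + 2 * (n - d₁) ^ 2) * t ^ d₁ /
          ((∏ i ∈ Finset.range d₁, (1 - q ^ (i + 1))) *
            ∏ i ∈ Finset.range (n - d₁), (1 - q ^ (i + 1)))) *
        (X 1 : MvPolynomial (Fin 2) K) ^ d₁ * (X 0) ^ (n - d₁) =
      C ((-1 : K) ^ n * q ^ (n * (n + 1) / 2) /
          ∏ i ∈ Finset.range n, (1 - q ^ (i + 1))) *
        ∏ i ∈ Finset.range n, ((X 1 : MvPolynomial (Fin 2) K) - C (q ^ i) * X 0) :=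
  qHypergeometric_quiver_identity_general t q ht2 hq n
end
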